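/- Let s_n be a sequence of norms on ℝ² converging locally uniformly to a norm s. Then the Jacobians J₂(s_n) = π / m₂({v : s_n(v) ≤ 1}) converge to J₂(s) = π / m₂({v : s(v) ≤ 1}), where m₂ is Lebesgue measure on ℝ². -/
import Mathlib


open MeasureTheory Filter Pointwise Set ENNReal

/-- `N` is a norm on the real vector space `ℝ × ℝ` (i.e. `ℝ²`). -/
structure IsNorm (N : ℝ × ℝ → ℝ) : Prop where
  eq_zero_iff : ∀ v, N v = 0 ↔ v = 0
  smul : ∀ (c : ℝ) (v : ℝ × ℝ), N (c • v) = |c| * N v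
  add_le : ∀ v w, N (v + w) ≤ N v + N w

/-- The Jacobian of a norm `N` on `ℝ²`: `J₂(N) = π / m₂({N ≤ 1})`, where `m₂` is
Lebesgue measure on `ℝ²`. -/
noncomputable def normJacobian (N : ℝ × ℝ → ℝ) : ℝ :=
  Real.pi / (volume {v : ℝ × ℝ | N v ≤ 1}).toReal

namespace IsNorm

variable {N : ℝ × ℝ → ℝ}

lemma zero (h : IsNorm N) : N 0 = 0 := (h.eq_zero_iff 0).2 rfl

lemma nonneg (h : IsNorm N) (v : ℝ × ℝ) : 0 ≤ N v := by
  have h1 := h.add_le v ((-1 : ℝ) • v)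
  have h2 := h.smul (-1) v
  have h3 : v + (-1 : ℝ) • v = 0 := by module
  rw [h3, h.zero] at h1
  rw [h2] at h1
  simp only [abs_neg, abs_one, one_mul] at h1
  linarith

lemma le_const_mul (h : IsNorm N) :
    ∀ v, N v ≤ (N (1, 0) + N (0, 1)) * ‖v‖ := by
  intro v
  have hv : v = v.1 • ((1 : ℝ), (0 : ℝ)) + v.2 • ((0 : ℝ), (1 : ℝ)) := by
    ext <;> simp
  have h1 : N v ≤ |v.1| * N (1, 0) + |v.2| * N (0, 1) := by
    calc N v = N (v.1 • ((1 : ℝ), (0 : ℝ)) + v.2 • ((0 : ℝ), (1 : ℝ))) := by rw [← hv]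
    _ ≤ N (v.1 • ((1 : ℝ), (0 : ℝ))) + N (v.2 • ((0 : ℝ), (1 : ℝ))) := h.add_le _ _
    _ = |v.1| * N (1, 0) + |v.2| * N (0, 1) := by rw [h.smul, h.smul]
  have hf : |v.1| ≤ ‖v‖ := norm_fst_le v
  have hs : |v.2| ≤ ‖v‖ := norm_snd_le v
  have n1 : 0 ≤ N (1, 0) := h.nonneg _
  have n2 : 0 ≤ N (0, 1) := h.nonneg _
  nlinarith

lemma continuous (h : IsNorm N) : Continuous N := by
  set C : ℝ := N (1, 0) + N (0, 1) with hC
  have hC0 : 0 ≤ C := add_nonneg (h.nonneg _) (h.nonneg _)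
  have lip : LipschitzWith C.toNNReal N := by
    apply LipschitzWith.of_dist_le_mul
    intro v w
    rw [Real.dist_eq, dist_eq_norm]
    have h1 : N v ≤ N w + N (v - w) := by
      have := h.add_le w (v - w)
      simpa using this
    have h2 : N w ≤ N v + N (v - w) := by
      have h3 := h.add_le v (w - v)
      have h4 : N (w - v) = N (v - w) := by
        have := h.smul (-1) (v - w)
        simp only [abs_neg, abs_one, one_mul, neg_smul, one_smul] at this
        rw [← this]; ring_nf
      simp only [add_sub_cancel] at h3
      linarith
    have h5 : N (v - w) ≤ C * ‖v - w‖ := h.le_const_mul _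
    rw [Real.coe_toNNReal _ hC0]
    rw [abs_le]
    constructor <;> nlinarith
  exact lip.continuous

lemma exists_pos_lower (h : IsNorm N) : ∃ c > 0, ∀ v, c * ‖v‖ ≤ N v := by
  have hcpt := isCompact_sphere (0 : ℝ × ℝ) 1
  have hne : (Metric.sphere (0 : ℝ × ℝ) 1).Nonempty := by
    refine ⟨((1 : ℝ), (0 : ℝ)), ?_⟩
    simp [mem_sphere_zero_iff_norm, Prod.norm_def]
  obtain ⟨x, hx, hxmin⟩ := hcpt.exists_isMinOn hne h.continuous.continuousOn
  have hx1 : ‖x‖ = 1 := mem_sphere_zero_iff_norm.1 hx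
  have hx0 : x ≠ 0 := by
    intro hx0; rw [hx0, norm_zero] at hx1; norm_num at hx1
  have hc : 0 < N x := by
    rcases lt_or_eq_of_le (h.nonneg x) with h' | h'
    · exact h'
    · exact absurd ((h.eq_zero_iff x).1 h'.symm) hx0
  refine ⟨N x, hc, fun v => ?_⟩
  rcases eq_or_ne v 0 with rfl | hv
  · simp [h.zero]
  · have hnv : 0 < ‖v‖ := norm_pos_iff.2 hv
    have hu : (‖v‖⁻¹ • v) ∈ Metric.sphere (0 : ℝ × ℝ) 1 := by
      rw [mem_sphere_zero_iff_norm, norm_smul, norm_inv, norm_norm]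
      field_simp
    have h1 : N x ≤ N (‖v‖⁻¹ • v) := hxmin hu
    rw [h.smul, abs_inv, abs_norm] at h1
    have := mul_le_mul_of_nonneg_left h1 hnv.le
    rw [mul_comm (N x)]
    calc ‖v‖ * N x ≤ ‖v‖ * (‖v‖⁻¹ * N v) := this
    _ = N v := by field_simp

lemma ball_smul (h : IsNorm N) {r : ℝ} (hr : 0 < r) :
    {v : ℝ × ℝ | N v ≤ r} = r • {v : ℝ × ℝ | N v ≤ 1} := by
  ext v
  constructor
  · intro hv
    refine ⟨r⁻¹ • v, ?_, ?_⟩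
    · simp only [mem_setOf_eq, h.smul, abs_inv, abs_of_pos hr]
      rw [inv_mul_le_iff₀ hr, mul_one]
      exact hv
    · show r • r⁻¹ • v = v
      rw [smul_smul, mul_inv_cancel₀ hr.ne', one_smul]
  · rintro ⟨w, hw, rfl⟩
    simp only [mem_setOf_eq, h.smul, abs_of_pos hr]
    calc r * N w ≤ r * 1 := by
          exact mul_le_mul_of_nonneg_left hw hr.le
    _ = r := mul_one r

lemma volume_pos (h : IsNorm N) : 0 < volume {v : ℝ × ℝ | N v ≤ 1} := by
  set C : ℝ := N (1, 0) + N (0, 1) with hC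
  have hC0 : 0 < C := by
    have h1 : 0 < N (1, 0) := by
      rcases lt_or_eq_of_le (h.nonneg (1, 0)) with h' | h'
      · exact h'
      · exfalso
        have := (h.eq_zero_iff (1, 0)).1 h'.symm
        simp [Prod.ext_iff] at this
    have h2 : 0 ≤ N (0, 1) := h.nonneg _
    linarith
  have hsub : Metric.ball (0 : ℝ × ℝ) C⁻¹ ⊆ {v : ℝ × ℝ | N v ≤ 1} := by
    intro v hv
    rw [Metric.mem_ball, dist_zero_right] at hv
    have h1 : N v ≤ C * ‖v‖ := h.le_const_mul v
    have h2 : C * ‖v‖ ≤ C * C⁻¹ := by nlinarith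
    rw [mul_inv_cancel₀ hC0.ne'] at h2
    exact le_trans h1 h2
  calc (0 : ℝ≥0∞) < volume (Metric.ball (0 : ℝ × ℝ) C⁻¹) :=
        Metric.measure_ball_pos volume 0 (by positivity)
  _ ≤ volume {v : ℝ × ℝ | N v ≤ 1} := measure_mono hsub

lemma volume_lt_top (h : IsNorm N) : volume {v : ℝ × ℝ | N v ≤ 1} < ⊤ := by
  obtain ⟨c, hc, hlow⟩ := h.exists_pos_lower
  have hsub : {v : ℝ × ℝ | N v ≤ 1} ⊆ Metric.closedBall 0 c⁻¹ := by
    intro v hv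
    rw [Metric.mem_closedBall, dist_zero_right]
    have h1 := hlow v
    rw [mem_setOf_eq] at hv
    rw [show c⁻¹ = 1 / c by ring, le_div_iff₀ hc]
    nlinarith
  exact (measure_mono hsub).trans_lt measure_closedBall_lt_top

end IsNorm

lemma key_subsets {N slim : ℝ × ℝ → ℝ} (hN : IsNorm N) (hlim : IsNorm slim)
    {δ : ℝ} (hδ0 : 0 < δ) (hδ1 : δ < 1)
    (H : ∀ v ∈ {v : ℝ × ℝ | slim v ≤ 2}, dist (slim v) (N v) < δ) :
    {v : ℝ × ℝ | N v ≤ 1} ⊆ {v | slim v ≤ 1 + δ} ∧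
    {v : ℝ × ℝ | slim v ≤ 1} ⊆ {v | N v ≤ 1 + δ} := by
  constructor
  · intro v hv
    rw [mem_setOf_eq] at hv ⊢
    rcases le_or_gt (slim v) 2 with h2 | h2
    · have := H v h2
      rw [Real.dist_eq, abs_lt] at this
      linarith
    · exfalso
      set t := 2 / slim v with ht
      have hslim0 : 0 < slim v := by linarith
      have ht0 : 0 < t := by positivity
      have ht1 : t < 1 := by rw [ht, div_lt_one hslim0]; linarith
      have hw : slim (t • v) = 2 := by
        rw [hlim.smul, abs_of_pos ht0, ht]; field_simp
      have hwK : (t • v) ∈ {v : ℝ × ℝ | slim v ≤ 2} := le_of_eq hw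
      have hNw : N (t • v) ≤ t := by
        rw [hN.smul, abs_of_pos ht0]
        nlinarith [hN.nonneg v]
      have hd := H _ hwK
      rw [Real.dist_eq, hw, abs_lt] at hd
      have := hN.nonneg (t • v)
      linarith
  · intro v hv
    rw [mem_setOf_eq] at hv ⊢
    have hvK : v ∈ {v : ℝ × ℝ | slim v ≤ 2} := by
      rw [mem_setOf_eq]; linarith
    have := H v hvK
    rw [Real.dist_eq, abs_lt] at this
    linarith

/-- If a sequence of norms `sₙ` on `ℝ²` converges locally uniformly to a norm `s`, then the
Jacobians `J₂(sₙ) = π / m₂({sₙ ≤ 1})` converge to `J₂(s) = π / m₂({s ≤ 1})`. -/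
theorem stmt9 (s : ℕ → (ℝ × ℝ → ℝ)) (slim : ℝ × ℝ → ℝ)
    (hn : ∀ n, IsNorm (s n)) (hlim : IsNorm slim)
    (hconv : TendstoLocallyUniformly s slim atTop) :
    Tendsto (fun n => normJacobian (s n)) atTop (nhds (normJacobian slim)) := by
  have hApos := hlim.volume_pos
  have hAtop := hlim.volume_lt_top
  set A := {v : ℝ × ℝ | slim v ≤ 1} with hA
  set V := (volume A).toReal with hV
  have hV0 : 0 < V := ENNReal.toReal_pos hApos.ne' hAtop.ne
  obtain ⟨c, hc, hlow⟩ := hlim.exists_pos_lower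
  set K := {v : ℝ × ℝ | slim v ≤ 2} with hK
  have hKc : IsCompact K := by
    apply IsCompact.of_isClosed_subset (isCompact_closedBall (0 : ℝ × ℝ) (2 / c))
    · exact isClosed_le hlim.continuous continuous_const
    · intro v hv
      rw [Metric.mem_closedBall, dist_zero_right, le_div_iff₀ hc]
      have := hlow v
      rw [hK, mem_setOf_eq] at hv
      nlinarith
  have hUnif : TendstoUniformlyOn s slim atTop K :=
    (tendstoLocallyUniformlyOn_iff_tendstoUniformlyOn_of_compact hKc).1
      hconv.tendstoLocallyUniformlyOn
  rw [Metric.tendstoUniformlyOn_iff] at hUnif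
  have hVn : Tendsto (fun n => (volume {v : ℝ × ℝ | s n v ≤ 1}).toReal) atTop (nhds V) := by
    rw [Metric.tendsto_nhds]
    intro ε hε
    set δ := min (1 / 2) (ε / (8 * V + 1)) with hδ
    have hδ0 : 0 < δ := lt_min (by norm_num) (by positivity)
    have hδh : δ ≤ 1 / 2 := min_le_left _ _
    have hδε : δ ≤ ε / (8 * V + 1) := min_le_right _ _
    have hδ1 : δ < 1 := lt_of_le_of_lt hδh (by norm_num)
    filter_upwards [hUnif δ hδ0] with n hnd
    obtain ⟨hsub1, hsub2⟩ := key_subsets (hn n) hlim hδ0 hδ1 hnd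
    have h1δ : (0 : ℝ) < 1 + δ := by linarith
    have hfr : Module.finrank ℝ (ℝ × ℝ) = 2 := by simp
    have e1 : volume {v : ℝ × ℝ | s n v ≤ 1} ≤ ENNReal.ofReal ((1 + δ) ^ 2) * volume A := by
      calc volume {v : ℝ × ℝ | s n v ≤ 1} ≤ volume {v : ℝ × ℝ | slim v ≤ 1 + δ} :=
            measure_mono hsub1
      _ = volume ((1 + δ) • A) := by rw [hlim.ball_smul h1δ]
      _ = ENNReal.ofReal ((1 + δ) ^ 2) * volume A := by
            rw [Measure.addHaar_smul_of_nonneg volume h1δ.le A, hfr]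
    have e2 : volume A ≤ ENNReal.ofReal ((1 + δ) ^ 2) * volume {v : ℝ × ℝ | s n v ≤ 1} := by
      calc volume A ≤ volume {v : ℝ × ℝ | s n v ≤ 1 + δ} := measure_mono hsub2
      _ = volume ((1 + δ) • {v : ℝ × ℝ | s n v ≤ 1}) := by rw [(hn n).ball_smul h1δ]
      _ = ENNReal.ofReal ((1 + δ) ^ 2) * volume {v : ℝ × ℝ | s n v ≤ 1} := by
            rw [Measure.addHaar_smul_of_nonneg volume h1δ.le, hfr]
    have hAn_top : volume {v : ℝ × ℝ | s n v ≤ 1} < ⊤ := (hn n).volume_lt_top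
    set Vn := (volume {v : ℝ × ℝ | s n v ≤ 1}).toReal with hVn
    have hVn0 : 0 ≤ Vn := ENNReal.toReal_nonneg
    have r1 : Vn ≤ (1 + δ) ^ 2 * V := by
      have := (ENNReal.toReal_le_toReal hAn_top.ne
        (ENNReal.mul_ne_top ENNReal.ofReal_ne_top hAtop.ne)).2 e1
      rwa [ENNReal.toReal_mul, ENNReal.toReal_ofReal (by positivity)] at this
    have r2 : V ≤ (1 + δ) ^ 2 * Vn := by
      have := (ENNReal.toReal_le_toReal hAtop.ne
        (ENNReal.mul_ne_top ENNReal.ofReal_ne_top hAn_top.ne)).2 e2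
      rwa [ENNReal.toReal_mul, ENNReal.toReal_ofReal (by positivity)] at this
    rw [Real.dist_eq, abs_lt]
    have hδsmall : δ * (8 * V + 1) ≤ ε := by
      rw [← le_div_iff₀ (by positivity)]
      exact hδε
    have hδ2 : δ ^ 2 ≤ δ := by nlinarith
    have hd2V : δ ^ 2 * V ≤ δ * V := mul_le_mul_of_nonneg_right hδ2 hV0.le
    have hup : Vn - V ≤ 3 * δ * V := by nlinarith
    have hlo : V - Vn ≤ 8 * δ * V := by
      have hVnle : Vn ≤ V + 3 * δ * V := by linarith
      have hd2Vn : δ ^ 2 * Vn ≤ δ * Vn := mul_le_mul_of_nonneg_right hδ2 hVn0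
      have h3 : V ≤ Vn + 3 * δ * Vn := by nlinarith
      have h4 : δ * Vn ≤ δ * (V + 3 * δ * V) :=
        mul_le_mul_of_nonneg_left hVnle hδ0.le
      nlinarith [mul_nonneg (mul_nonneg hδ0.le hδ0.le) hV0.le]
    have hstrict : 8 * δ * V < ε := lt_of_lt_of_le (by nlinarith) hδsmall
    constructor <;> nlinarith [mul_nonneg hδ0.le hV0.le]
  have hpi : Tendsto (fun _ : ℕ => Real.pi) atTop (nhds Real.pi) := tendsto_const_nhds
  exact hpi.div hVn hV0.ne'
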